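/- Let p(x) = Σ_{j=1}^d c_j e^{2πi y_j x} be a trigonometric polynomial with d ≥ 2, real frequencies y_1 < ⋯ < y_d and all c_j ≠ 0, and let P(z) = Σ_{j=1}^d c_j e^{2πi y_j z} be its entire extension to ℂ. If P has a non-real zero z₀, then there exist ε > 0, a real number L > 0, and for every interval of length L a real number s in it such that P has a zero in the disc of radius ε centered at z₀ + s. In particular, the set of real translates s for which P vanishes somewhere in B(z₀ + s, ε) is syndetic in ℝ. -/

import Mathlib

/-!
The exponential sum `P` is almost periodic in `Re z`, uniformly on compact sets: the real `s` at
which all characters `e^{2πi y_j s}` are simultaneously close to `1` form a syndetic set (they are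
the near-returns of a translation-invariant orbit with totally bounded range), and for such `s` the
translate `P(· + s)` is uniformly close to `P` on a given compact set. Unless `P ≡ 0`, the zero
`z₀` is isolated, so `‖P‖ ≥ m > 0` on a small circle around it; whenever `‖P(· + s) - P‖ < m / 2`
on the closed disc, `‖P(· + s)‖` is smaller at the centre than on the circle, and the minimum
modulus principle gives a zero of `P(· + s)` in the disc.
-/

open Complex Metric Set

def Syndetic (S : Set ℝ) : Prop :=
  ∃ L > 0, ∀ t : ℝ, ∃ s ∈ Icc t (t + L), s ∈ S

theorem Syndetic.mono {S T : Set ℝ} (hS : Syndetic S) (hST : S ⊆ T) : Syndetic T := by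
  obtain ⟨L, hL, h⟩ := hS
  exact ⟨L, hL, fun t => (h t).imp fun s ⟨hs, hsS⟩ => ⟨hs, hST hsS⟩⟩

theorem syndetic_setOf_dist_lt {X : Type*} [PseudoMetricSpace X] {f : ℝ → X}
    (hf : TotallyBounded (range f))
    (hinv : ∀ a b t, dist (f (a + t)) (f (b + t)) = dist (f a) (f b)) {δ : ℝ} (hδ : 0 < δ) :
    Syndetic {s | dist (f s) (f 0) < δ} := by
  obtain ⟨T, hTf, hT, hcover⟩ := finite_approx_of_totallyBounded hf δ hδ
  rw [← image_univ] at hTf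
  obtain ⟨U, -, hU, rfl⟩ := exists_subset_image_finite_and.1 ⟨T, hTf, hT, rfl⟩
  obtain ⟨M, hM, hUM⟩ := hU.isBounded.exists_pos_norm_le
  refine ⟨2 * M, by positivity, fun t => ?_⟩
  obtain ⟨u, hu, hdist⟩ : ∃ u ∈ U, dist (f (t + M)) (f u) < δ := by
    simpa using hcover (mem_range_self (t + M))
  have hu' := abs_le.1 (hUM u hu)
  refine ⟨t + M - u, ⟨by linarith, by linarith⟩, ?_⟩
  show dist _ _ < δ
  rwa [← hinv _ 0 u, sub_add_cancel, zero_add]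

theorem norm_exp_two_pi_I_mul (y t : ℝ) : ‖exp (2 * Real.pi * I * y * t)‖ = 1 := by
  rw [show 2 * Real.pi * I * y * t = ((2 * Real.pi * y * t : ℝ) : ℂ) * I by push_cast; ring]
  exact norm_exp_ofReal_mul_I _

theorem exp_two_pi_I_mul_add (y : ℝ) (z w : ℂ) :
    exp (2 * Real.pi * I * y * (z + w)) =
      exp (2 * Real.pi * I * y * z) * exp (2 * Real.pi * I * y * w) := by
  rw [← exp_add]
  ring_nf

theorem syndetic_setOf_forall_norm_exp_sub_one_lt {ι : Type*} [Fintype ι] (y : ι → ℝ) {δ : ℝ}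
    (hδ : 0 < δ) : Syndetic {s : ℝ | ∀ j, ‖exp (2 * Real.pi * I * y j * s) - 1‖ < δ} := by
  set f : ℝ → ι → ℂ := fun t j => exp (2 * Real.pi * I * y j * t)
  have hbdd : range f ⊆ closedBall 0 1 := by
    rintro _ ⟨t, rfl⟩
    simpa [f, norm_exp_two_pi_I_mul] using
      (pi_norm_le_iff_of_nonneg zero_le_one).2 fun j => (norm_exp_two_pi_I_mul (y j) t).le
  have hinv : ∀ a b t, dist (f (a + t)) (f (b + t)) = dist (f a) (f b) := by
    intro a b t
    have : ∀ j, nndist (f (a + t) j) (f (b + t) j) = nndist (f a j) (f b j) := by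
      intro j
      simp only [f, ← NNReal.coe_inj, coe_nndist, ofReal_add, exp_two_pi_I_mul_add, dist_eq_norm,
        ← sub_mul, norm_mul, norm_exp_two_pi_I_mul, mul_one]
    simp only [dist_pi_def, this]
  have hf : TotallyBounded (range f) :=
    (isBounded_closedBall.subset hbdd).isCompact_closure.totallyBounded.subset subset_closure
  refine (syndetic_setOf_dist_lt hf hinv hδ).mono fun s hs j => ?_
  simpa [f, dist_eq_norm] using (dist_pi_lt_iff hδ).1 hs j

noncomputable def expSum {ι : Type*} [Fintype ι] (c : ι → ℂ) (y : ι → ℝ) (z : ℂ) : ℂ :=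
  ∑ j, c j * exp (2 * Real.pi * I * y j * z)

section expSum

variable {ι : Type*} [Fintype ι] (c : ι → ℂ) (y : ι → ℝ)

theorem differentiable_expSum : Differentiable ℂ (expSum c y) := by
  unfold expSum
  fun_prop

theorem norm_expSum_add_sub_le (z : ℂ) (s : ℝ) :
    ‖expSum c y (z + s) - expSum c y z‖ ≤
      ∑ j, ‖c j * exp (2 * Real.pi * I * y j * z)‖ * ‖exp (2 * Real.pi * I * y j * s) - 1‖ := by
  rw [expSum, expSum, ← Finset.sum_sub_distrib]
  refine (norm_sum_le _ _).trans_eq (Finset.sum_congr rfl fun j _ => ?_)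
  rw [← norm_mul, exp_two_pi_I_mul_add]
  ring_nf

theorem syndetic_setOf_forall_norm_expSum_add_sub_lt {K : Set ℂ} (hK : IsCompact K) {η : ℝ}
    (hη : 0 < η) : Syndetic {s : ℝ | ∀ z ∈ K, ‖expSum c y (z + s) - expSum c y z‖ < η} := by
  obtain ⟨C, hC⟩ := hK.exists_bound_of_continuousOn
    (f := fun z => ∑ j, ‖c j * exp (2 * Real.pi * I * y j * z)‖) (by fun_prop)
  have hδ : 0 < η / (|C| + 1) := by positivity
  refine (syndetic_setOf_forall_norm_exp_sub_one_lt y hδ).mono fun s hs z hz => ?_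
  calc ‖expSum c y (z + s) - expSum c y z‖
      ≤ ∑ j, ‖c j * exp (2 * Real.pi * I * y j * z)‖ * ‖exp (2 * Real.pi * I * y j * s) - 1‖ :=
        norm_expSum_add_sub_le c y z s
    _ ≤ ∑ j, ‖c j * exp (2 * Real.pi * I * y j * z)‖ * (η / (|C| + 1)) := by
        gcongr with j
        exact (hs j).le
    _ ≤ |C| * (η / (|C| + 1)) := by
        rw [← Finset.sum_mul]
        gcongr
        exact ((Real.le_norm_self _).trans (hC z hz)).trans (le_abs_self C)
    _ < η := by
        rw [mul_div_assoc', div_lt_iff₀ (by positivity)]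
        linarith

end expSum

theorem DiffContOnCl.exists_mem_closedBall_eq_zero_of_norm_lt {g : ℂ → ℂ} {z₀ : ℂ} {r : ℝ}
    (hg : DiffContOnCl ℂ g (ball z₀ r)) (hr : 0 < r) (h : ∀ z ∈ sphere z₀ r, ‖g z₀‖ < ‖g z‖) :
    ∃ z ∈ closedBall z₀ r, g z = 0 := by
  by_contra! hne
  have hinv : DiffContOnCl ℂ (fun z => (g z)⁻¹) (ball z₀ r) :=
    hg.inv fun z hz => hne z (closure_ball z₀ hr.ne' ▸ hz)
  obtain ⟨w, hw, hmax⟩ :=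
    exists_mem_frontier_isMaxOn_norm isBounded_ball ⟨z₀, mem_ball_self hr⟩ hinv
  rw [frontier_ball z₀ hr.ne'] at hw
  have : ‖(g z₀)⁻¹‖ ≤ ‖(g w)⁻¹‖ := hmax (subset_closure (mem_ball_self hr))
  rw [norm_inv, norm_inv, inv_le_inv₀ (norm_pos_iff.2 (hne z₀ (mem_closedBall_self hr.le)))
    (norm_pos_iff.2 (hne w (sphere_subset_closedBall hw)))] at this
  exact (h w hw).not_ge this

theorem DiffContOnCl.exists_mem_closedBall_eq_zero_of_norm_sub_lt {f g : ℂ → ℂ} {z₀ : ℂ}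
    {r m : ℝ} (hg : DiffContOnCl ℂ g (ball z₀ r)) (hr : 0 < r) (hf₀ : f z₀ = 0)
    (hm : ∀ z ∈ sphere z₀ r, m ≤ ‖f z‖) (hgf : ∀ z ∈ closedBall z₀ r, ‖g z - f z‖ < m / 2) :
    ∃ z ∈ closedBall z₀ r, g z = 0 := by
  refine hg.exists_mem_closedBall_eq_zero_of_norm_lt hr fun z hz => ?_
  have hcentre := hgf z₀ (mem_closedBall_self hr.le)
  rw [hf₀, sub_zero] at hcentre
  have := norm_sub_norm_le (f z) (g z)
  rw [norm_sub_rev] at this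
  linarith [hm z hz, hgf z (sphere_subset_closedBall hz)]

theorem Differentiable.eq_zero_or_exists_sphere_norm_ge {f : ℂ → ℂ} (hf : Differentiable ℂ f)
    (z₀ : ℂ) : f = 0 ∨ ∃ r > 0, ∃ m > 0, ∀ z ∈ sphere z₀ r, m ≤ ‖f z‖ := by
  rcases (hf.analyticAt z₀).eventually_eq_zero_or_eventually_ne_zero with hzero | hne
  · left
    funext z
    exact AnalyticOnNhd.eqOn_zero_of_preconnected_of_eventuallyEq_zero
      (fun z _ => hf.analyticAt z) isPreconnected_univ (mem_univ z₀) hzero (mem_univ z)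
  right
  obtain ⟨r, hr, hball⟩ := eventually_nhds_iff_ball.1 (eventually_nhdsWithin_iff.1 hne)
  have hsphere : ∀ z ∈ sphere z₀ (r / 2), 0 < ‖f z‖ := fun z hz =>
    norm_pos_iff.2 (hball z (sphere_subset_ball (by linarith) hz)
      (ne_of_mem_sphere hz (by positivity)))
  obtain ⟨m, hm, hle⟩ :=
    (isCompact_sphere z₀ (r / 2)).exists_forall_le' hf.continuous.norm.continuousOn hsphere
  exact ⟨r / 2, by positivity, m, hm, hle⟩

theorem stmt7_general (d : ℕ) (y : Fin d → ℝ) (c : Fin d → ℂ)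
    (P : ℂ → ℂ) (hP : ∀ z, P z = ∑ j, c j * Complex.exp (2 * Real.pi * Complex.I * (y j) * z))
    (z₀ : ℂ) (hz₀ : P z₀ = 0) :
    ∃ ε > (0 : ℝ), ∃ L > (0 : ℝ), ∀ t : ℝ,
      ∃ s ∈ Set.Icc t (t + L), ∃ z : ℂ, ‖z - (z₀ + s)‖ < ε ∧ P z = 0 := by
  obtain rfl : P = expSum c y := funext hP
  suffices ∃ ε > (0 : ℝ), Syndetic {s : ℝ | ∃ z, ‖z - (z₀ + s)‖ < ε ∧ expSum c y z = 0} from this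
  rcases (differentiable_expSum c y).eq_zero_or_exists_sphere_norm_ge z₀ with
    hzero | ⟨r, hr, m, hm, hsphere⟩
  · exact ⟨1, one_pos, 1, one_pos,
      fun t => ⟨t, ⟨le_rfl, by linarith⟩, z₀ + t, by simp, congrFun hzero _⟩⟩
  have hnear := syndetic_setOf_forall_norm_expSum_add_sub_lt c y (isCompact_closedBall z₀ r)
    (half_pos hm)
  refine ⟨2 * r, by positivity, hnear.mono fun s hs => ?_⟩
  have hshift : DiffContOnCl ℂ (fun z => expSum c y (z + s)) (ball z₀ r) :=
    ((differentiable_expSum c y).comp (differentiable_id.add_const (s : ℂ))).diffContOnCl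
  obtain ⟨w, hw, hw₀⟩ := hshift.exists_mem_closedBall_eq_zero_of_norm_sub_lt hr hz₀ hsphere hs
  refine ⟨w + s, ?_, hw₀⟩
  rw [add_sub_add_right_eq_sub, ← dist_eq_norm]
  linarith [mem_closedBall.1 hw]

/-- If the entire extension `P(z) = Σ_j c_j e^{2πi y_j z}` of a trigonometric polynomial
(with `d ≥ 2`, strictly increasing real frequencies, nonzero coefficients) has a non-real
zero `z₀`, then there are `ε > 0` and `L > 0` such that every real interval of length `L`
contains a translate `s` with `P` vanishing in the disc `B(z₀ + s, ε)`: the set of such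
translates is syndetic in `ℝ`. -/
theorem stmt7 (d : ℕ) (hd : 2 ≤ d) (y : Fin d → ℝ) (hy : StrictMono y)
    (c : Fin d → ℂ) (hc : ∀ j, c j ≠ 0)
    (P : ℂ → ℂ) (hP : ∀ z, P z = ∑ j, c j * Complex.exp (2 * Real.pi * Complex.I * (y j) * z))
    (z₀ : ℂ) (hz₀im : z₀.im ≠ 0) (hz₀ : P z₀ = 0) :
    ∃ ε > (0 : ℝ), ∃ L > (0 : ℝ), ∀ t : ℝ,
      ∃ s ∈ Set.Icc t (t + L), ∃ z : ℂ, ‖z - (z₀ + s)‖ < ε ∧ P z = 0 :=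
  stmt7_general d y c P hP z₀ hz₀
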